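/- arXiv:1306.6421 — 3 statements merged into one kernel-verified Lean document; each statement's English description precedes it below -/
import Mathlib

section
/- For every real c > 0 and real α, the limit as n → ∞ of −n · sin(π + √(cn) + √(c(n−1)) − √(c(n−2)) − √(c(n−3))) · sin(√(cn) − √(c(n−1)) + √(c(n−2)) − √(c(n−3))) equals 2c. -/
open Real Filter Topology

/-! Since `sin (π + u) = -sin u`, the expression is `n sin (√c Uₙ) sin (√c Vₙ)` with
`Uₙ = √n + √(n-1) - √(n-2) - √(n-3)` and `Vₙ = √n - √(n-1) + √(n-2) - √(n-3)`.
Each `√n (√(n-a) - √n)` tends to `-a/2`, the derivative of `√(1 - a t)` at `0`, so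
`√n Uₙ → 2` and `√n Vₙ → 1`; as `sin y = y sinc y` with `sinc` continuous and `sinc 0 = 1`,
the expression tends to `√c · 2 · √c · 1 = 2c`. -/

lemma sin_eq_mul_sinc (y : ℝ) : sin y = y * sinc y := by
  rcases eq_or_ne y 0 with rfl | hy
  · simp
  · rw [sinc_of_ne_zero hy, mul_div_cancel₀ _ hy]

lemma tendsto_sqrt_mul_sqrt_sub_sub_sqrt (a : ℝ) :
    Tendsto (fun x : ℝ => √x * (√(x - a) - √x)) atTop (𝓝 (-a / 2)) := by
  have hderiv : HasDerivAt (fun t : ℝ => √(1 - a * t)) (-a / 2) 0 := by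
    have := ((hasDerivAt_id (0 : ℝ)).const_mul a).const_sub 1 |>.sqrt (by simp)
    simpa using this
  have hslope := (hasDerivAt_iff_tendsto_slope.mp hderiv).mono_left
    (nhdsWithin_mono _ fun t (ht : 0 < t) => ht.ne')
  refine (hslope.comp tendsto_inv_atTop_nhdsGT_zero).congr' ?_
  filter_upwards [eventually_gt_atTop 0] with x hx
  have hsplit : √(x - a) = √x * √(1 - a * x⁻¹) := by
    rw [← sqrt_mul hx.le]; congr 1; field_simp
  rw [Function.comp_apply, slope_def_field, hsplit]
  simp only [mul_zero, sub_zero, sqrt_one, div_inv_eq_mul]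
  linear_combination (1 - √(1 - a * x⁻¹)) * mul_self_sqrt hx.le

lemma tendsto_zero_of_tendsto_sqrt_mul {f : ℝ → ℝ} {p : ℝ}
    (hf : Tendsto (fun x => √x * f x) atTop (𝓝 p)) : Tendsto f atTop (𝓝 0) := by
  have h := (tendsto_inv_atTop_zero.comp tendsto_sqrt_atTop).mul hf
  rw [zero_mul] at h
  refine h.congr' ?_
  filter_upwards [eventually_gt_atTop 0] with x hx
  simp [(sqrt_pos.mpr hx).ne']

lemma tendsto_mul_sin_mul_sin {f g : ℝ → ℝ} {p q : ℝ}
    (hf : Tendsto (fun x => √x * f x) atTop (𝓝 p))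
    (hg : Tendsto (fun x => √x * g x) atTop (𝓝 q)) :
    Tendsto (fun x => x * sin (f x) * sin (g x)) atTop (𝓝 (p * q)) := by
  have hsinc : ∀ {h : ℝ → ℝ} {r : ℝ}, Tendsto (fun x => √x * h x) atTop (𝓝 r) →
      Tendsto (fun x => sinc (h x)) atTop (𝓝 1) := fun hh =>
    (continuous_sinc.tendsto' 0 1 sinc_zero).comp (tendsto_zero_of_tendsto_sqrt_mul hh)
  have h := (hf.mul hg).mul ((hsinc hf).mul (hsinc hg))
  rw [mul_one, mul_one] at h
  refine h.congr' ?_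
  filter_upwards [eventually_ge_atTop 0] with x hx
  rw [sin_eq_mul_sinc (f x), sin_eq_mul_sinc (g x)]
  linear_combination (f x * g x * sinc (f x) * sinc (g x)) * mul_self_sqrt hx

lemma tendsto_sqrt_mul_sqrt_add_sqrt_sub_sqrt_sub_sqrt :
    Tendsto (fun x : ℝ => √x * (√x + √(x - 1) - √(x - 2) - √(x - 3))) atTop (𝓝 2) := by
  have h := ((tendsto_sqrt_mul_sqrt_sub_sub_sqrt 1).sub
    (tendsto_sqrt_mul_sqrt_sub_sub_sqrt 2)).sub (tendsto_sqrt_mul_sqrt_sub_sub_sqrt 3)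
  rw [show -1 / 2 - -2 / 2 - -3 / 2 = (2 : ℝ) by norm_num] at h
  exact h.congr fun x => by ring

lemma tendsto_sqrt_mul_sqrt_sub_sqrt_add_sqrt_sub_sqrt :
    Tendsto (fun x : ℝ => √x * (√x - √(x - 1) + √(x - 2) - √(x - 3))) atTop (𝓝 1) := by
  have h := ((tendsto_sqrt_mul_sqrt_sub_sub_sqrt 2).sub
    (tendsto_sqrt_mul_sqrt_sub_sub_sqrt 1)).sub (tendsto_sqrt_mul_sqrt_sub_sub_sqrt 3)
  rw [show -2 / 2 - -1 / 2 - -3 / 2 = (1 : ℝ) by norm_num] at h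
  exact h.congr fun x => by ring

theorem stmt4_general (c : ℝ) (hc : 0 < c) :
    Tendsto (fun n : ℕ =>
        -(n : ℝ) *
          Real.sin (Real.pi + Real.sqrt (c * n) + Real.sqrt (c * ((n : ℝ) - 1)) -
            Real.sqrt (c * ((n : ℝ) - 2)) - Real.sqrt (c * ((n : ℝ) - 3))) *
          Real.sin (Real.sqrt (c * n) - Real.sqrt (c * ((n : ℝ) - 1)) +
            Real.sqrt (c * ((n : ℝ) - 2)) - Real.sqrt (c * ((n : ℝ) - 3))))
      atTop (nhds (2 * c)) := by
  have harg : ∀ x : ℝ, π + √(c * x) + √(c * (x - 1)) - √(c * (x - 2)) - √(c * (x - 3)) =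
      √c * (√x + √(x - 1) - √(x - 2) - √(x - 3)) + π := fun x => by
    simp only [sqrt_mul hc.le]; ring
  have hU := tendsto_sqrt_mul_sqrt_add_sqrt_sub_sqrt_sub_sqrt.const_mul √c
  have hV := tendsto_sqrt_mul_sqrt_sub_sqrt_add_sqrt_sub_sqrt.const_mul √c
  have h := tendsto_mul_sin_mul_sin
    (f := fun x => √c * (√x + √(x - 1) - √(x - 2) - √(x - 3)))
    (g := fun x => √c * (√x - √(x - 1) + √(x - 2) - √(x - 3)))
    (hU.congr fun x => by ring) (hV.congr fun x => by ring)
  rw [show √c * 2 * (√c * 1) = 2 * c by linear_combination 2 * mul_self_sqrt hc.le] at h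
  refine (h.comp tendsto_natCast_atTop_atTop).congr fun n => ?_
  rw [Function.comp_apply, harg, sin_add_pi, neg_mul_neg]
  simp only [sqrt_mul hc.le]
  simp only [mul_add, mul_sub]

theorem stmt4 (c : ℝ) (hc : 0 < c) (α : ℝ) :
    Tendsto (fun n : ℕ =>
        -(n : ℝ) *
          Real.sin (Real.pi + Real.sqrt (c * n) + Real.sqrt (c * ((n : ℝ) - 1)) -
            Real.sqrt (c * ((n : ℝ) - 2)) - Real.sqrt (c * ((n : ℝ) - 3))) *
          Real.sin (Real.sqrt (c * n) - Real.sqrt (c * ((n : ℝ) - 1)) +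
            Real.sqrt (c * ((n : ℝ) - 2)) - Real.sqrt (c * ((n : ℝ) - 3))))
      atTop (nhds (2 * c)) :=
  stmt4_general c hc
end

section
/- Let φ_n^α(c) = 2√(nc) − απ/2 − π/4. For every real c > 0 and real α, the expression cos(φ_{n−1}^α(c))·cos(φ_n^α(c)) + cos(φ_{n−2}^{α+1}(c))·cos(φ_{n−1}^{α+1}(c)) tends to 1 as n → ∞. -/
/-!
Raising α by one shifts the phase by π/2, so cos φ^{α+1} = sin φ^α, and the expression equals
cos φ_{n-1} cos φ_n + sin φ_{n-2} sin φ_{n-1} = cos (φ_{n-1} - φ_n) + sin φ_{n-1} (sin φ_{n-2} - sin φ_n).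
Since √(x - d) - √x → 0, consecutive phases merge: the first term tends to cos 0 = 1 and the second,
by the 1-Lipschitz bound on sin, to 0.
-/

open Real Filter

/-- φ_n^α(c) = 2√(nc) − απ/2 − π/4, with `n` a real variable. -/
noncomputable def phi (n α c : ℝ) : ℝ :=
  2 * Real.sqrt (n * c) - α * Real.pi / 2 - Real.pi / 4

theorem tendsto_sqrt_add_sub_sqrt (a : ℝ) :
    Tendsto (fun x : ℝ => √(x + a) - √x) atTop (nhds 0) := by
  have hden : Tendsto (fun x : ℝ => √(x + a) + √x) atTop atTop :=
    tendsto_atTop_mono (fun _ => le_add_of_nonneg_left (sqrt_nonneg _)) tendsto_sqrt_atTop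
  refine (tendsto_const_nhds (x := a)).div_atTop hden |>.congr' ?_
  filter_upwards [eventually_gt_atTop (max 0 (-a))] with x hx
  have hx0 : 0 < x := (le_max_left _ _).trans_lt hx
  have hxa : 0 ≤ x + a := by linarith [(le_max_right 0 (-a)).trans_lt hx]
  have hpos : 0 < √(x + a) + √x := by positivity
  rw [div_eq_iff hpos.ne']
  nlinarith [sq_sqrt hxa, sq_sqrt hx0.le]

theorem tendsto_phi_sub_sub_phi {c : ℝ} (hc : 0 < c) (d α : ℝ) :
    Tendsto (fun x : ℝ => phi (x - d) α c - phi x α c) atTop (nhds 0) := by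
  have hsqrt := ((tendsto_sqrt_add_sub_sqrt (-(d * c))).comp
    (tendsto_id.atTop_mul_const hc)).const_mul 2
  rw [mul_zero] at hsqrt
  refine hsqrt.congr fun x => ?_
  simp only [phi, Function.comp_apply, id]
  ring_nf

theorem cos_phi_add_one (m α c : ℝ) : cos (phi m (α + 1) c) = sin (phi m α c) := by
  rw [← cos_sub_pi_div_two]
  congr 1
  unfold phi
  ring

theorem stmt7 (c : ℝ) (hc : 0 < c) (α : ℝ) :
    Tendsto (fun n : ℕ =>
        Real.cos (phi ((n : ℝ) - 1) α c) * Real.cos (phi (n : ℝ) α c) +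
          Real.cos (phi ((n : ℝ) - 2) (α + 1) c) * Real.cos (phi ((n : ℝ) - 1) (α + 1) c))
      atTop (nhds 1) := by
  set φ : ℕ → ℝ → ℝ := fun n d => phi ((n : ℝ) - d) α c
  have hφ (d : ℝ) : Tendsto (fun n : ℕ => φ n d - φ n 0) atTop (nhds 0) := by
    simpa [φ, Function.comp_def] using
      (tendsto_phi_sub_sub_phi hc d α).comp tendsto_natCast_atTop_atTop
  have hcos : Tendsto (fun n => cos (φ n 1 - φ n 0)) atTop (nhds 1) := by
    simpa [Function.comp_def] using (continuous_cos.tendsto 0).comp (hφ 1)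
  have hsin : Tendsto (fun n => sin (φ n 1) * (sin (φ n 2) - sin (φ n 0))) atTop (nhds 0) := by
    refine squeeze_zero_norm (fun n => ?_) (by simpa using (hφ 2).abs)
    rw [norm_mul, ← one_mul |φ n 2 - φ n 0|]
    exact mul_le_mul (abs_sin_le_one _) (abs_sin_sub_sin_le _ _) (norm_nonneg _) zero_le_one
  refine (add_zero (1 : ℝ) ▸ hcos.add hsin).congr fun n => ?_
  simp only [φ, cos_phi_add_one, cos_sub, sub_zero]
  ring
end

section
/- Let μ be a nontrivial positive measure on ℝ with finite moments, let ⟨f,g⟩_S = ∫ f·g dμ + M·f(c)·g(c) + N·f'(c)·g'(c) with M, N ≥ 0 and c ∈ ℝ. Then for all polynomials f, g: ⟨(x−c)²·f, g⟩_S = ⟨f, (x−c)²·g⟩_S, i.e., multiplication by (x−c)² is symmetric with respect to ⟨·,·⟩_S. -/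
open Polynomial MeasureTheory

theorem stmt14 (μ : Measure ℝ) (hμ : ∀ k : ℕ, Integrable (fun x => x ^ k) μ)
    (hnt : ∃ s : Set ℝ, MeasurableSet s ∧ μ s ≠ 0 ∧ μ sᶜ ≠ 0)
    (M N : ℝ) (hM : 0 ≤ M) (hN : 0 ≤ N) (c : ℝ)
    (S : Polynomial ℝ → Polynomial ℝ → ℝ)
    (hS : ∀ f g : Polynomial ℝ,
      S f g = (∫ x, f.eval x * g.eval x ∂μ) + M * f.eval c * g.eval c +
        N * (derivative f).eval c * (derivative g).eval c) :
    ∀ f g : Polynomial ℝ, S ((X - C c) ^ 2 * f) g = S f ((X - C c) ^ 2 * g) := by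
  intro f g
  rw [hS, hS]
  have h1 : ∀ h : Polynomial ℝ, ((X - C c) ^ 2 * h).eval c = 0 := by
    intro h; simp
  have h2 : ∀ h : Polynomial ℝ, (derivative ((X - C c) ^ 2 * h)).eval c = 0 := by
    intro h
    simp [derivative_mul, derivative_pow]
  rw [h1, h2, h1, h2]
  have : (∫ x, ((X - C c) ^ 2 * f).eval x * g.eval x ∂μ)
      = ∫ x, f.eval x * ((X - C c) ^ 2 * g).eval x ∂μ := by
    congr 1; funext x; simp; ring
  rw [this]
  ring
end
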